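/- Let A be a complex n×n matrix all of whose eigenvalues have negative real part, and let r_c(A) = inf_{ω∈ℝ} σ_min(iωI − A), where σ_min denotes the smallest singular value. Then there exists a complex n×n matrix B with ‖B‖ = r_c(A) such that A + B has an eigenvalue with nonnegative real part (i.e. ẋ = (A+B)x is not asymptotically stable). -/

import Mathlib

open Matrix

/-- The operator 2-norm of a complex `n × n` matrix. -/
noncomputable def opNormC {n : ℕ} (A : Matrix (Fin n) (Fin n) ℂ) : ℝ :=
  ‖Matrix.toEuclideanCLM (𝕜 := ℂ) A‖

/-- The smallest singular value of a complex `n × n` matrix: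
the infimum of `‖A x‖` over unit vectors `x`. -/
noncomputable def sMin {n : ℕ} (A : Matrix (Fin n) (Fin n) ℂ) : ℝ :=
  ⨅ x : {x : EuclideanSpace ℂ (Fin n) // ‖x‖ = 1},
    ‖Matrix.toEuclideanCLM (𝕜 := ℂ) A (x : EuclideanSpace ℂ (Fin n))‖

/-- The complex stability radius `r_c(A) = inf_{ω ∈ ℝ} σ_min(iω I − A)`. -/
noncomputable def stabRadius {n : ℕ} (A : Matrix (Fin n) (Fin n) ℂ) : ℝ :=
  ⨅ ω : ℝ, sMin ((Complex.I * (ω : ℂ)) • (1 : Matrix (Fin n) (Fin n) ℂ) - A)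

/-!
The function `ω ↦ σ_min(iωI − A)` is 1-Lipschitz and grows like `|ω|`, so the infimum `r_c(A)`
is attained at some `ω₀`. If the unit vector `x` realises `σ_min(iω₀I − A)` and
`v = (iω₀I − A) x`, the rank-one matrix `B = v x*` has `‖B‖ = ‖v‖ = r_c(A)` and
`(A + B) x = iω₀ x`.
-/

open Filter Topology InnerProductSpace

namespace Matrix

variable {𝕜 ι : Type*} [RCLike 𝕜] [Fintype ι] [DecidableEq ι]

theorem toEuclideanCLM_smul_one (c : 𝕜) :
    toEuclideanCLM (𝕜 := 𝕜) (c • (1 : Matrix ι ι 𝕜)) = c • 1 := by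
  rw [map_smul, map_one]

theorem mem_spectrum_of_toEuclideanCLM_apply_eq {M : Matrix ι ι 𝕜} {x : EuclideanSpace 𝕜 ι}
    {μ : 𝕜} (hx : x ≠ 0) (h : toEuclideanCLM (𝕜 := 𝕜) M x = μ • x) : μ ∈ spectrum 𝕜 M := by
  rw [← spectrum_toLin']
  refine Module.End.HasEigenvalue.mem_spectrum
    (Module.End.hasEigenvalue_of_hasEigenvector (x := WithLp.ofLp x) ⟨?_, by simpa using hx⟩)
  rw [Module.End.mem_eigenspace_iff, toLin'_apply, ← ofLp_toEuclideanCLM, h]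
  rfl

end Matrix

section SingularValue

variable {n : ℕ}

theorem sMin_le (M : Matrix (Fin n) (Fin n) ℂ) {x : EuclideanSpace ℂ (Fin n)} (hx : ‖x‖ = 1) :
    sMin M ≤ ‖toEuclideanCLM (𝕜 := ℂ) M x‖ := by
  unfold sMin
  exact ciInf_le ⟨0, by rintro _ ⟨y, rfl⟩; exact norm_nonneg _⟩ (⟨x, hx⟩ : {x // ‖x‖ = 1})

theorem sMin_nonneg (M : Matrix (Fin n) (Fin n) ℂ) : 0 ≤ sMin M :=
  Real.iInf_nonneg fun _ => norm_nonneg _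

variable [NeZero n]

theorem exists_norm_eq_one_norm_apply_eq_sMin (M : Matrix (Fin n) (Fin n) ℂ) :
    ∃ x : EuclideanSpace ℂ (Fin n), ‖x‖ = 1 ∧ ‖toEuclideanCLM (𝕜 := ℂ) M x‖ = sMin M := by
  obtain ⟨x, hx, hmin⟩ := (isCompact_sphere (0 : EuclideanSpace ℂ (Fin n)) 1).exists_isMinOn
    (NormedSpace.sphere_nonempty.mpr zero_le_one)
    (toEuclideanCLM (𝕜 := ℂ) M).continuous.norm.continuousOn
  rw [mem_sphere_zero_iff_norm] at hx
  have : Nonempty {x : EuclideanSpace ℂ (Fin n) // ‖x‖ = 1} := ⟨⟨x, hx⟩⟩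
  exact ⟨x, hx, le_antisymm (le_ciInf fun y => hmin (mem_sphere_zero_iff_norm.mpr y.2))
    (sMin_le M hx)⟩

theorem sMin_le_sMin_add_opNormC_sub (M N : Matrix (Fin n) (Fin n) ℂ) :
    sMin M ≤ sMin N + opNormC (M - N) := by
  obtain ⟨x, hx, hNx⟩ := exists_norm_eq_one_norm_apply_eq_sMin N
  calc sMin M ≤ ‖toEuclideanCLM (𝕜 := ℂ) M x‖ := sMin_le M hx
    _ ≤ ‖toEuclideanCLM (𝕜 := ℂ) N x‖ + ‖toEuclideanCLM (𝕜 := ℂ) (M - N) x‖ := by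
      rw [map_sub, _root_.sub_apply]
      exact norm_le_norm_add_norm_sub' _ _
    _ ≤ sMin N + opNormC (M - N) := by
      rw [hNx]
      exact add_le_add_right ((toEuclideanCLM (𝕜 := ℂ) (M - N)).unit_le_opNorm x hx.le) _

theorem opNormC_smul_one (c : ℂ) : opNormC (c • (1 : Matrix (Fin n) (Fin n) ℂ)) = ‖c‖ := by
  rw [opNormC, toEuclideanCLM_smul_one, norm_smul, norm_one, mul_one]

theorem sMin_smul_one (c : ℂ) : sMin (c • (1 : Matrix (Fin n) (Fin n) ℂ)) = ‖c‖ := by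
  obtain ⟨x, hx, hcx⟩ := exists_norm_eq_one_norm_apply_eq_sMin (c • 1 : Matrix (Fin n) (Fin n) ℂ)
  rw [← hcx, toEuclideanCLM_smul_one, _root_.smul_apply, one_apply_eq_self, norm_smul, hx,
    mul_one]

theorem norm_sub_opNormC_le_sMin_smul_one_sub (A : Matrix (Fin n) (Fin n) ℂ) (c : ℂ) :
    ‖c‖ - opNormC A ≤ sMin (c • 1 - A) := by
  have := sMin_le_sMin_add_opNormC_sub (c • 1) (c • 1 - A)
  rw [sub_sub_cancel, sMin_smul_one] at this
  linarith

theorem exists_opNormC_eq_sMin_mem_spectrum (A : Matrix (Fin n) (Fin n) ℂ) (μ : ℂ) :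
    ∃ B : Matrix (Fin n) (Fin n) ℂ, opNormC B = sMin (μ • 1 - A) ∧ μ ∈ spectrum ℂ (A + B) := by
  obtain ⟨x, hx, hmin⟩ := exists_norm_eq_one_norm_apply_eq_sMin (μ • 1 - A)
  set v := toEuclideanCLM (𝕜 := ℂ) (μ • 1 - A) x
  refine ⟨(toEuclideanCLM (𝕜 := ℂ)).symm (rankOne ℂ v x), ?_, ?_⟩
  · rw [opNormC, StarAlgEquiv.apply_symm_apply, norm_rankOne, hx, mul_one, hmin]
  · refine mem_spectrum_of_toEuclideanCLM_apply_eq (ne_zero_of_norm_ne_zero (hx ▸ one_ne_zero)) ?_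
    rw [map_add, StarAlgEquiv.apply_symm_apply, _root_.add_apply, rankOne_apply,
      inner_self_eq_norm_sq_to_K, hx]
    simp [v]

end SingularValue

section StabilityRadius

variable {n : ℕ} [NeZero n]

theorem lipschitzWith_sMin_smul_one_sub (A : Matrix (Fin n) (Fin n) ℂ) :
    LipschitzWith 1 fun ω : ℝ => sMin ((Complex.I * ω) • (1 : Matrix (Fin n) (Fin n) ℂ) - A) := by
  refine LipschitzWith.of_le_add fun ω ω' => ?_
  have := sMin_le_sMin_add_opNormC_sub
    ((Complex.I * ω) • (1 : Matrix (Fin n) (Fin n) ℂ) - A) ((Complex.I * ω') • 1 - A)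
  rwa [sub_sub_sub_cancel_right, ← sub_smul, ← mul_sub, opNormC_smul_one, norm_mul,
    Complex.norm_I, one_mul, ← Complex.ofReal_sub, Complex.norm_real, ← dist_eq_norm] at this

theorem tendsto_sMin_smul_one_sub_cocompact (A : Matrix (Fin n) (Fin n) ℂ) :
    Tendsto (fun ω : ℝ => sMin ((Complex.I * ω) • (1 : Matrix (Fin n) (Fin n) ℂ) - A))
      (cocompact ℝ) atTop := by
  refine tendsto_atTop_mono (fun ω => norm_sub_opNormC_le_sMin_smul_one_sub A _) ?_
  simp only [norm_mul, Complex.norm_I, one_mul, Complex.norm_real]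
  exact tendsto_atTop_add_const_right _ _ tendsto_norm_cocompact_atTop

theorem exists_stabRadius_eq_sMin (A : Matrix (Fin n) (Fin n) ℂ) :
    ∃ ω : ℝ, stabRadius A = sMin ((Complex.I * ω) • (1 : Matrix (Fin n) (Fin n) ℂ) - A) := by
  obtain ⟨ω, hω⟩ := (lipschitzWith_sMin_smul_one_sub A).continuous.exists_forall_le
    (tendsto_sMin_smul_one_sub_cocompact A)
  exact ⟨ω, le_antisymm (ciInf_le ⟨0, by rintro _ ⟨_, rfl⟩; exact sMin_nonneg _⟩ ω)
    (le_ciInf hω)⟩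

end StabilityRadius

theorem exists_opNorm_eq_stabRadius_not_stable_general {n : ℕ} (hn : 0 < n)
    (A : Matrix (Fin n) (Fin n) ℂ) :
    ∃ B : Matrix (Fin n) (Fin n) ℂ, opNormC B = stabRadius A ∧
      ∃ μ ∈ spectrum ℂ (A + B), 0 ≤ μ.re := by
  have : NeZero n := NeZero.of_pos hn
  obtain ⟨ω, hω⟩ := exists_stabRadius_eq_sMin A
  obtain ⟨B, hB, hspec⟩ := exists_opNormC_eq_sMin_mem_spectrum A (Complex.I * ω)
  exact ⟨B, hB.trans hω.symm, _, hspec, by simp⟩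

/-- If all eigenvalues of `A` have negative real part, then there exists `B` with
`‖B‖ = r_c(A)` such that `A + B` has an eigenvalue with nonnegative real part
(i.e. `ẋ = (A + B) x` is not asymptotically stable). -/
theorem exists_opNorm_eq_stabRadius_not_stable {n : ℕ} (hn : 0 < n)
    (A : Matrix (Fin n) (Fin n) ℂ)
    (hA : ∀ μ ∈ spectrum ℂ A, μ.re < 0) :
    ∃ B : Matrix (Fin n) (Fin n) ℂ, opNormC B = stabRadius A ∧
      ∃ μ ∈ spectrum ℂ (A + B), 0 ≤ μ.re :=
  exists_opNorm_eq_stabRadius_not_stable_general hn A
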